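/- In the proxy setup (without requiring p(d|c) ≠ p(d|c')): suppose p(c) = 1/2, p(d|c) = 1−p(d|c') ≥ 1/2 (i.e., p(d|c) = p(d'|c')), and 1−p(a|c') ≥ p(a|c) ≥ 1/2 (i.e., p(a'|c') ≥ p(a|c) ≥ 1/2). If E[Y|a,c] − E[Y|a,c'] ≤ E[Y|a',c'] − E[Y|a',c] ≤ 0, then RD_crude ≤ RD_true and RD_obs ≤ RD_true. -/

import Mathlib

/-!
With `p(c) = p(d) = 1/2` each risk difference is `E_w₁[Y | a] - E_w₀[Y | a']`, where
`E_w[Y | x] = condExp E[Y|x,c] E[Y|x,c'] w`: for `RD_crude` the weights are `p(c|a)`, `p(c|a')`, for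
`RD_obs` the averages over `d` of `p(c|a,d)`, `p(c|a',d)` (`condExp` is affine in `w`), and for
`RD_true` both are `1/2`. With `α = E[Y|a,c] - E[Y|a,c'] ≤ -β` and `β = E[Y|a',c] - E[Y|a',c'] ≥ 0`
the excess over `RD_true` is `α (w₁ - 1/2) - β (w₀ - 1/2) ≤ -β (w₁ + w₀ - 1)`, so it suffices that
`w₁ ≥ 1/2` and `w₁ + w₀ ≥ 1`.

Under a uniform prior, `y v / (y v + y' v') + x v' / (x v' + x' v) ≥ 1` whenever `x' y' ≤ x y`:
the first term dominates `x' v / (x v' + x' v)`, the complement of the second. For `p = p(a|c)`,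
`q = p(a|c')` both weight conditions follow from `q² ≤ p²` and `q (1 - q) ≤ p (1 - p)`, which hold
because `0 < q ≤ 1 - p ≤ p`.
-/

/-- p(c | x, v) = p(x|c) p(v|c) p(c) / (p(x|c) p(v|c) p(c) + p(x|c') p(v|c') p(c')),
with p(c') = 1 - p(c). -/
noncomputable def pcGiven (pxc pxc' pvc pvc' pc : ℝ) : ℝ :=
  pxc * pvc * pc / (pxc * pvc * pc + pxc' * pvc' * (1 - pc))

/-- E[Y | x, v] = E[Y|x,c] * p(c|x,v) + E[Y|x,c'] * (1 - p(c|x,v)). -/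
noncomputable def condExp (yc yc' w : ℝ) : ℝ := yc * w + yc' * (1 - w)

lemma pcGiven_half (x x' v v' : ℝ) :
    pcGiven x x' v v' (1/2) = x * v / (x * v + x' * v') := by
  unfold pcGiven
  rw [show (1 : ℝ) - 1/2 = 1/2 by norm_num, ← add_mul, mul_div_mul_right _ _ (by norm_num)]

lemma one_le_pcGiven_half_add_pcGiven_half {x x' y y' v v' : ℝ} (hx : 0 < x) (hx' : 0 ≤ x')
    (hy : 0 < y) (hy' : 0 ≤ y') (hv : 0 < v) (hv' : 0 < v') (h : x' * y' ≤ x * y) :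
    1 ≤ pcGiven y y' v v' (1/2) + pcGiven x x' v' v (1/2) := by
  rw [pcGiven_half, pcGiven_half]
  have hden : 0 < x * v' + x' * v := by positivity
  have hcompl : x * v' / (x * v' + x' * v) + x' * v / (x * v' + x' * v) = 1 := by
    rw [← add_div, div_self hden.ne']
  have hcompare : x' * v / (x * v' + x' * v) ≤ y * v / (y * v + y' * v') := by
    rw [div_le_div_iff₀ hden (by positivity)]
    nlinarith [mul_le_mul_of_nonneg_right h (mul_pos hv hv').le]
  linarith

lemma condExp_sub_condExp_average (y y' z z' u u' v v' : ℝ) :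
    (condExp y y' u - condExp z z' v) * (1/2) + (condExp y y' u' - condExp z z' v') * (1/2) =
      condExp y y' ((u + u') / 2) - condExp z z' ((v + v') / 2) := by
  unfold condExp
  ring

lemma condExp_sub_condExp_le {Yac Yac' Ybc Ybc' w₁ w₀ : ℝ}
    (hY1 : Yac - Yac' ≤ Ybc' - Ybc) (hY2 : Ybc' - Ybc ≤ 0) (hw₁ : 1/2 ≤ w₁) (hw : 1 ≤ w₁ + w₀) :
    condExp Yac Yac' w₁ - condExp Ybc Ybc' w₀ ≤ (Yac - Ybc) * (1/2) + (Yac' - Ybc') * (1/2) := by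
  unfold condExp
  nlinarith [mul_le_mul_of_nonneg_right (by linarith : Yac - Yac' ≤ -(Ybc - Ybc'))
      (by linarith : (0 : ℝ) ≤ w₁ - 1/2),
    mul_nonneg (by linarith : (0 : ℝ) ≤ Ybc - Ybc') (by linarith : (0 : ℝ) ≤ w₁ + w₀ - 1)]

theorem stmt5_general (pc pdc pdc' pac pac' Yac Yac' Ybc Ybc' : ℝ)
    (hpdc'0 : 0 < pdc') (hpdc'1 : pdc' < 1)
    (hpac'0 : 0 < pac')
    (hc : pc = 1/2)
    (hd : pdc = 1 - pdc')
    (ha1 : pac ≤ 1 - pac') (ha2 : 1/2 ≤ pac)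
    (hY1 : Yac - Yac' ≤ Ybc' - Ybc) (hY2 : Ybc' - Ybc ≤ 0) :
    (condExp Yac Yac' (pcGiven pac pac' 1 1 pc) - condExp Ybc Ybc' (pcGiven (1 - pac) (1 - pac') 1 1 pc)) ≤ ((Yac - Ybc) * pc + (Yac' - Ybc') * (1 - pc)) ∧ ((condExp Yac Yac' (pcGiven pac pac' pdc pdc' pc) - condExp Ybc Ybc' (pcGiven (1 - pac) (1 - pac') pdc pdc' pc)) * (pdc * pc + pdc' * (1 - pc)) + (condExp Yac Yac' (pcGiven pac pac' (1 - pdc) (1 - pdc') pc) - condExp Ybc Ybc' (pcGiven (1 - pac) (1 - pac') (1 - pdc) (1 - pdc') pc)) * (1 - (pdc * pc + pdc' * (1 - pc)))) ≤ ((Yac - Ybc) * pc + (Yac' - Ybc') * (1 - pc)) := by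
  subst hc hd
  rw [sub_sub_cancel, show (1 - pdc') * (1/2) + pdc' * (1 - 1/2) = (1/2 : ℝ) by ring,
    show (1 : ℝ) - 1/2 = 1/2 by norm_num]
  have hp : 0 < pac := by linarith
  have hp' : 0 < 1 - pac := by linarith
  have hq' : 0 < 1 - pac' := by linarith
  have hd' : 0 < 1 - pdc' := by linarith
  have hsq : pac' * pac' ≤ pac * pac := by nlinarith
  have hvar : pac' * (1 - pac') ≤ pac * (1 - pac) := by nlinarith
  have hsum_a'a {v v' : ℝ} (hv : 0 < v) (hv' : 0 < v') :=
    one_le_pcGiven_half_add_pcGiven_half hp hpac'0.le hp' hq'.le hv hv' hvar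
  have hsum_aa {v v' : ℝ} (hv : 0 < v) (hv' : 0 < v') :=
    one_le_pcGiven_half_add_pcGiven_half hp hpac'0.le hp hpac'0.le hv hv' hsq
  constructor
  · refine condExp_sub_condExp_le hY1 hY2 ?_ ?_
    · linarith [hsum_aa one_pos one_pos]
    · linarith [hsum_a'a one_pos one_pos]
  · rw [condExp_sub_condExp_average]
    refine condExp_sub_condExp_le hY1 hY2 ?_ ?_
    · linarith [hsum_aa hd' hpdc'0]
    · linarith [hsum_a'a hd' hpdc'0, hsum_a'a hpdc'0 hd']

/-- Proxy setup: if p(c) = 1/2, p(d|c) = p(d'|c') ≥ 1/2,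
p(a'|c') ≥ p(a|c) ≥ 1/2 and E[Y|a,c] - E[Y|a,c'] ≤ E[Y|a',c'] - E[Y|a',c] ≤ 0,
then RD_crude ≤ RD_true and RD_obs ≤ RD_true. -/
theorem stmt5 (pc pdc pdc' pac pac' Yac Yac' Ybc Ybc' : ℝ)
    (hpc0 : 0 < pc) (hpc1 : pc < 1)
    (hpdc0 : 0 < pdc) (hpdc1 : pdc < 1) (hpdc'0 : 0 < pdc') (hpdc'1 : pdc' < 1)
    (hpac0 : 0 < pac) (hpac1 : pac < 1) (hpac'0 : 0 < pac') (hpac'1 : pac' < 1)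
    (hc : pc = 1/2)
    (hd : pdc = 1 - pdc') (hd2 : 1/2 ≤ pdc)
    (ha1 : pac ≤ 1 - pac') (ha2 : 1/2 ≤ pac)
    (hY1 : Yac - Yac' ≤ Ybc' - Ybc) (hY2 : Ybc' - Ybc ≤ 0) :
    (condExp Yac Yac' (pcGiven pac pac' 1 1 pc) - condExp Ybc Ybc' (pcGiven (1 - pac) (1 - pac') 1 1 pc)) ≤ ((Yac - Ybc) * pc + (Yac' - Ybc') * (1 - pc)) ∧ ((condExp Yac Yac' (pcGiven pac pac' pdc pdc' pc) - condExp Ybc Ybc' (pcGiven (1 - pac) (1 - pac') pdc pdc' pc)) * (pdc * pc + pdc' * (1 - pc)) + (condExp Yac Yac' (pcGiven pac pac' (1 - pdc) (1 - pdc') pc) - condExp Ybc Ybc' (pcGiven (1 - pac) (1 - pac') (1 - pdc) (1 - pdc') pc)) * (1 - (pdc * pc + pdc' * (1 - pc)))) ≤ ((Yac - Ybc) * pc + (Yac' - Ybc') * (1 - pc)) :=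
  stmt5_general pc pdc pdc' pac pac' Yac Yac' Ybc Ybc' hpdc'0 hpdc'1 hpac'0 hc hd ha1 ha2 hY1 hY2
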